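/- Define G : ℝ² → ℝ by G(κ₁,κ₂) = (κ₁ − κ₂)² − (4 + (κ₁ + κ₂)²). Let F : ℝ² → ℝ be any differentiable function, and define Z : ℝ² → ℝ by Z = F·(∂₁G·(1 + κ₁²) + ∂₂G·(1 + κ₂²)) + (1 + κ₁κ₂)·(κ₂ − κ₁)·(∂₁G·∂₂F − ∂₁F·∂₂G), where ∂₁, ∂₂ denote partial derivatives with respect to κ₁ and κ₂. Then Z(κ₁,κ₂) = 0 at every point (κ₁,κ₂) where G(κ₁,κ₂) = 0 (equivalently, where 1 + κ₁κ₂ = 0). -/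
import Mathlib


/-- `G(κ₁,κ₂) = (κ₁ − κ₂)² − (4 + (κ₁ + κ₂)²)`, so that `G = −4(1 + κ₁κ₂)`. -/
def Gcurv (κ₁ κ₂ : ℝ) : ℝ := (κ₁ - κ₂) ^ 2 - (4 + (κ₁ + κ₂) ^ 2)

/-- The zero-order reaction term `Z` vanishes at every zero of `G`, no matter
what (differentiable) speed `F` is used. -/
theorem Z_vanishes_at_zero_of_G (F : ℝ → ℝ → ℝ)
    (hF : Differentiable ℝ (fun p : ℝ × ℝ => F p.1 p.2)) :
    ∀ κ₁ κ₂ : ℝ, Gcurv κ₁ κ₂ = 0 →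
      F κ₁ κ₂ * (deriv (fun x => Gcurv x κ₂) κ₁ * (1 + κ₁ ^ 2)
          + deriv (fun y => Gcurv κ₁ y) κ₂ * (1 + κ₂ ^ 2))
        + (1 + κ₁ * κ₂) * (κ₂ - κ₁) *
          (deriv (fun x => Gcurv x κ₂) κ₁ * deriv (fun y => F κ₁ y) κ₂
            - deriv (fun x => F x κ₂) κ₁ * deriv (fun y => Gcurv κ₁ y) κ₂) = 0 := by
  intro κ₁ κ₂ hG
  have hk : 1 + κ₁ * κ₂ = 0 := by
    have : Gcurv κ₁ κ₂ = -4 * (1 + κ₁ * κ₂) := by unfold Gcurv; ring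
    linarith [this ▸ hG]
  have h1 : HasDerivAt (fun x => Gcurv x κ₂)
      (2 * (κ₁ - κ₂) ^ 1 * 1 - (2 * (κ₁ + κ₂) ^ 1 * 1)) κ₁ := by
    unfold Gcurv
    exact (((hasDerivAt_id κ₁).sub_const κ₂).pow 2).sub
      ((((hasDerivAt_id κ₁).add_const κ₂).pow 2).const_add 4)
  have h2 : HasDerivAt (fun y => Gcurv κ₁ y)
      ((2 * (κ₁ - κ₂) ^ 1 * (-1)) - 2 * (κ₁ + κ₂) ^ 1 * 1) κ₂ := by
    unfold Gcurv
    exact (((hasDerivAt_id κ₂).const_sub κ₁).pow 2).sub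
      ((((hasDerivAt_id κ₂).const_add κ₁).pow 2).const_add 4)
  rw [h1.deriv, h2.deriv]
  linear_combination (-4 * F κ₁ κ₂ * (κ₁ + κ₂) + (κ₂ - κ₁) *
    (-4 * κ₂ * deriv (fun y => F κ₁ y) κ₂ + 4 * κ₁ * deriv (fun x => F x κ₂) κ₁)) * hk
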